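/- The Lie algebra sl_2^Λ is not reductive: its radical R = Fz_0 ⊕ ⋯ ⊕ Fz_Λ is nonzero and is not contained in the center of sl_2^Λ; in fact the center of sl_2^Λ is trivial. -/

import Mathlib

/-- A presentation of the Lie algebra `sl₂^Λ` over `F`: a Lie algebra with a basis
`e, h, f` (the `Fin 3` part, `0 ↦ e`, `1 ↦ h`, `2 ↦ f`) and `z_0, …, z_Λ`, subject to the
relations `[h,e] = 2e`, `[h,f] = −2f`, `[e,f] = h`, `[z_j, z_{j'}] = 0`,
`[h,z_j] = (Λ−2j)z_j`, `[f,z_j] = z_{j+1}` (with `z_{Λ+1} := 0`) and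
`[e,z_j] = j(Λ−j+1)z_{j−1}`. -/
structure SL2Lam (F : Type) [Field F] (Λ : ℕ) where
  carrier : Type
  [lieRing : LieRing carrier]
  [lieAlgebra : LieAlgebra F carrier]
  basis : Module.Basis (Fin 3 ⊕ Fin (Λ + 1)) F carrier
  rel_he : ⁅basis (Sum.inl 1), basis (Sum.inl 0)⁆ = 2 • basis (Sum.inl 0)
  rel_hf : ⁅basis (Sum.inl 1), basis (Sum.inl 2)⁆ = -(2 • basis (Sum.inl 2))
  rel_ef : ⁅basis (Sum.inl 0), basis (Sum.inl 2)⁆ = basis (Sum.inl 1)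
  rel_zz : ∀ j j' : Fin (Λ + 1), ⁅basis (Sum.inr j), basis (Sum.inr j')⁆ = 0
  rel_hz : ∀ j : Fin (Λ + 1),
    ⁅basis (Sum.inl 1), basis (Sum.inr j)⁆ = ((Λ : ℤ) - 2 * (j : ℕ)) • basis (Sum.inr j)
  rel_fz : ∀ (j : ℕ) (hj : j < Λ),
    ⁅basis (Sum.inl 2), basis (Sum.inr ⟨j, by omega⟩)⁆ = basis (Sum.inr ⟨j + 1, by omega⟩)
  rel_fzTop : ⁅basis (Sum.inl 2), basis (Sum.inr ⟨Λ, by omega⟩)⁆ = 0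
  rel_ez : ∀ (j : ℕ) (hj : j ≤ Λ),
    ⁅basis (Sum.inl 0), basis (Sum.inr ⟨j, by omega⟩)⁆
      = (j * (Λ - j + 1)) • basis (Sum.inr ⟨j - 1, by omega⟩)

attribute [instance] SL2Lam.lieRing SL2Lam.lieAlgebra

/-!
The span `Z` of the `z_j` is an abelian ideal, and `sl₂^Λ = span {e, h, f} + Z` where `(h, e, f)`
is an `sl₂`-triple. Applying `ad f` or `ad e` twice to an element of an ideal `J ⊄ Z` isolates
its `e`- or `f`-coefficient, so `J` contains `h` modulo `Z`, hence all of `e, h, f`: `J + Z` is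
everything. As `[L, L] + Z = L`, every term of the derived series of `J` still fills `L` modulo
the proper ideal `Z`, so `J` is not solvable, and the radical is `Z`. A central element thus lies
in `Z`; `ad f` shifts `z_j` to `z_{j+1}` for `j < Λ` and `ad h` scales `z_Λ` by `-Λ ≠ 0`, so all
its coordinates vanish.
-/

open LieAlgebra LieSubmodule Submodule

theorem Submodule.lie_mem_of_mem_span {R L : Type*} [CommRing R] [LieRing L]
    [LieAlgebra R L] {s t : Set L} {N : Submodule R L} (h : ∀ x ∈ s, ∀ y ∈ t, ⁅x, y⁆ ∈ N)
    {x y : L} (hx : x ∈ span R s) (hy : y ∈ span R t) : ⁅x, y⁆ ∈ N := by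
  have : map₂ (LieModule.toEnd R L L : L →ₗ[R] Module.End R L) (span R s) (span R t) ≤ N := by
    rw [map₂_span_span, span_le]
    rintro _ ⟨x, hx, y, hy, rfl⟩
    exact h x hx y hy
  exact this (apply_mem_map₂ _ hx hy)

namespace LieIdeal

variable {R L : Type*} [CommRing R] [LieRing L] [LieAlgebra R L]

theorem lie_self_sup_eq_top {I Z : LieIdeal R L} (hperf : ⁅(⊤ : LieIdeal R L), ⊤⁆ ⊔ Z = ⊤)
    (hI : I ⊔ Z = ⊤) : ⁅I, I⁆ ⊔ Z = ⊤ := by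
  have hIZ : ⁅I, Z⁆ ≤ Z := lie_le_right Z I
  have hZI : ⁅Z, I ⊔ Z⁆ ≤ Z := lie_le_left Z _
  rw [eq_top_iff, ← hperf, ← hI, sup_lie, lie_sup, sup_le_iff, sup_le_iff, sup_le_iff]
  exact ⟨⟨⟨le_sup_left, hIZ.trans le_sup_right⟩, hZI.trans le_sup_right⟩, le_sup_right⟩

theorem derivedSeriesOfIdeal_sup_eq_top {I Z : LieIdeal R L}
    (hperf : ⁅(⊤ : LieIdeal R L), ⊤⁆ ⊔ Z = ⊤) (hI : I ⊔ Z = ⊤) (k : ℕ) :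
    derivedSeriesOfIdeal R L k I ⊔ Z = ⊤ := by
  induction k with
  | zero => exact hI
  | succ k ih => exact derivedSeriesOfIdeal_succ R L I k ▸ lie_self_sup_eq_top hperf ih

theorem not_isSolvable_of_sup_eq_top {I Z : LieIdeal R L} (hZ : Z ≠ ⊤)
    (hperf : ⁅(⊤ : LieIdeal R L), ⊤⁆ ⊔ Z = ⊤) (hI : I ⊔ Z = ⊤) : ¬ IsSolvable I := by
  intro hsol
  obtain ⟨k, hk⟩ := (isSolvable_iff R I).mp hsol
  rw [LieIdeal.derivedSeries_eq_bot_iff] at hk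
  apply hZ
  simpa [hk] using derivedSeriesOfIdeal_sup_eq_top hperf hI k

end LieIdeal

theorem LieAlgebra.radical_le_of_sup_eq_top {R L : Type*} [CommRing R] [LieRing L]
    [LieAlgebra R L] [IsNoetherian R L] {Z : LieIdeal R L} (hZ : Z ≠ ⊤)
    (hperf : ⁅(⊤ : LieIdeal R L), ⊤⁆ ⊔ Z = ⊤) (hmax : ∀ J : LieIdeal R L, ¬ J ≤ Z → J ⊔ Z = ⊤) :
    radical R L ≤ Z := by
  by_contra h
  exact LieIdeal.not_isSolvable_of_sup_eq_top hZ hperf (hmax _ h) inferInstance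

namespace IsSl2Triple

variable {K L : Type*} [Field K] [LieRing L] [LieAlgebra K L] {h e f : L}

lemma lie_f_e (t : IsSl2Triple h e f) : ⁅f, e⁆ = -h := by
  rw [← lie_skew, t.lie_e_f]

lemma lie_e_h (t : IsSl2Triple h e f) : ⁅e, h⁆ = -((2 : K) • e) := by
  rw [← lie_skew, t.lie_h_e_smul K]

lemma lie_f_h (t : IsSl2Triple h e f) : ⁅f, h⁆ = (2 : K) • f := by
  rw [← lie_skew, t.lie_lie_smul_f K, neg_neg]

lemma lie_f_lie_f (t : IsSl2Triple h e f) (a b c : K) :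
    ⁅f, ⁅f, a • e + (b • f + c • h)⁆⁆ = (-2 * a) • f := by
  simp only [lie_add, lie_smul, t.lie_f_e, t.lie_f_h (K := K), lie_self, lie_neg, smul_zero,
    lie_zero]
  module

lemma lie_e_lie_e (t : IsSl2Triple h e f) (a b c : K) :
    ⁅e, ⁅e, a • e + (b • f + c • h)⁆⁆ = (-2 * b) • e := by
  simp only [lie_add, lie_smul, t.lie_e_f, t.lie_e_h (K := K), lie_self, lie_neg, smul_zero,
    lie_zero]
  module

variable {I : LieIdeal K L}

lemma h_mem_of_e_mem (t : IsSl2Triple h e f) (he : e ∈ I) : h ∈ I :=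
  t.lie_e_f ▸ lie_mem_left K L I e f he

lemma h_mem_of_f_mem (t : IsSl2Triple h e f) (hf : f ∈ I) : h ∈ I :=
  t.lie_e_f ▸ I.lie_mem hf

lemma span_le_of_h_mem [NeZero (2 : K)] (t : IsSl2Triple h e f) (hh : h ∈ I) :
    span K {e, f, h} ≤ (I : Submodule K L) := by
  have he : (2 : K) • e ∈ I := t.lie_h_e_smul K ▸ lie_mem_left K L I h e hh
  have hf : -((2 : K) • f) ∈ I := t.lie_lie_smul_f K ▸ lie_mem_left K L I h f hh
  rw [span_le, Set.insert_subset_iff, Set.insert_subset_iff, Set.singleton_subset_iff]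
  exact ⟨(smul_mem_iff (I : Submodule K L) two_ne_zero).mp he,
    (smul_mem_iff (I : Submodule K L) two_ne_zero).mp (neg_mem_iff.mp hf), hh⟩

theorem sup_eq_top_of_not_le [NeZero (2 : K)] (t : IsSl2Triple h e f) {Z J : LieIdeal K L}
    (hspan : span K {e, f, h} ⊔ (Z : Submodule K L) = ⊤) (hJ : ¬ J ≤ Z) : J ⊔ Z = ⊤ := by
  obtain ⟨x, hxJ, hxZ⟩ := SetLike.not_le_iff_exists.mp hJ
  obtain ⟨y, hy, z, hz, rfl⟩ :=
    mem_sup.mp (hspan ▸ mem_top : x ∈ span K {e, f, h} ⊔ (Z : Submodule K L))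
  obtain ⟨a, -, ⟨b, -, ⟨c, rfl⟩, rfl⟩, rfl⟩ := by
    simpa only [mem_span_insert, mem_span_singleton] using hy
  set I := J ⊔ Z
  have hyI : a • e + (b • f + c • h) ∈ I := by
    simpa using I.sub_mem (LieSubmodule.mem_sup_left hxJ) (LieSubmodule.mem_sup_right hz)
  have hh : h ∈ I := by
    by_cases ha : a = 0
    · by_cases hb : b = 0
      · have hc : c ≠ 0 := by rintro rfl; simp_all
        subst ha hb
        exact (smul_mem_iff (I : Submodule K L) hc).mp (by simpa using hyI)
      · refine t.h_mem_of_e_mem ((smul_mem_iff (I : Submodule K L) ?_).mp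
          (t.lie_e_lie_e a b c ▸ I.lie_mem (I.lie_mem hyI)))
        exact mul_ne_zero (neg_ne_zero.mpr two_ne_zero) hb
    · refine t.h_mem_of_f_mem ((smul_mem_iff (I : Submodule K L) ?_).mp
          (t.lie_f_lie_f a b c ▸ I.lie_mem (I.lie_mem hyI)))
      exact mul_ne_zero (neg_ne_zero.mpr two_ne_zero) ha
  rw [← LieSubmodule.toSubmodule_eq_top, eq_top_iff, ← hspan]
  exact sup_le (t.span_le_of_h_mem hh) fun _ ↦ LieSubmodule.mem_sup_right

theorem radical_le [NeZero (2 : K)] [IsNoetherian K L] (t : IsSl2Triple h e f)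
    {Z : LieIdeal K L} (hspan : span K {e, f, h} ⊔ (Z : Submodule K L) = ⊤) (hh : h ∉ Z) :
    radical K L ≤ Z := by
  have hZ : Z ≠ ⊤ := fun hZ ↦ hh (hZ ▸ LieSubmodule.mem_top h)
  have hperf : ¬ ⁅(⊤ : LieIdeal K L), ⊤⁆ ≤ Z := fun hle ↦
    hh (hle (t.lie_e_f ▸ lie_mem_lie (LieSubmodule.mem_top e) (LieSubmodule.mem_top f)))
  exact radical_le_of_sup_eq_top hZ (t.sup_eq_top_of_not_le hspan hperf)
    fun _ ↦ t.sup_eq_top_of_not_le hspan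

end IsSl2Triple

namespace SL2Lam

variable {F : Type} [Field F] {Λ : ℕ} (P : SL2Lam F Λ)

instance : Module.Finite F P.carrier := .of_basis P.basis

theorem isSl2Triple :
    IsSl2Triple (P.basis (.inl 1)) (P.basis (.inl 0)) (P.basis (.inl 2)) where
  h_ne_zero := P.basis.ne_zero _
  lie_e_f := P.rel_ef
  lie_h_e_nsmul := P.rel_he
  lie_h_f_nsmul := P.rel_hf

def zSpan : Submodule F P.carrier :=
  span F (Set.range fun j : Fin (Λ + 1) => P.basis (.inr j))

theorem basis_inr_mem_zSpan (j : Fin (Λ + 1)) : P.basis (.inr j) ∈ P.zSpan :=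
  subset_span ⟨j, rfl⟩

theorem repr_inl_eq_zero_of_mem_zSpan {x : P.carrier} (hx : x ∈ P.zSpan) (m : Fin 3) :
    P.basis.repr x (.inl m) = 0 := by
  rw [zSpan, Set.range_comp' P.basis Sum.inr, P.basis.mem_span_image] at hx
  by_contra hm
  simpa using hx (Finsupp.mem_support_iff.mpr hm)

theorem lie_basis_mem_zSpan (i : Fin 3 ⊕ Fin (Λ + 1)) (j : Fin (Λ + 1)) :
    ⁅P.basis i, P.basis (.inr j)⁆ ∈ P.zSpan := by
  obtain ⟨j, hj⟩ := j
  rcases i with m | j'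
  · fin_cases m
    · exact P.rel_ez j (by omega) ▸ nsmul_mem (P.basis_inr_mem_zSpan _) _
    · exact P.rel_hz ⟨j, hj⟩ ▸ zsmul_mem (P.basis_inr_mem_zSpan _) _
    · rcases lt_or_eq_of_le (Nat.le_of_lt_succ hj) with hj | rfl
      · exact P.rel_fz j hj ▸ P.basis_inr_mem_zSpan _
      · exact P.rel_fzTop ▸ zero_mem _
  · exact P.rel_zz j' ⟨j, hj⟩ ▸ zero_mem _

def zIdeal : LieIdeal F P.carrier where
  toSubmodule := P.zSpan
  lie_mem {x _} hm := Submodule.lie_mem_of_mem_span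
    (by rintro _ ⟨i, rfl⟩ _ ⟨j, rfl⟩; exact P.lie_basis_mem_zSpan i j) (P.basis.mem_span x) hm

instance : IsLieAbelian P.zIdeal := by
  rw [LieSubmodule.lie_abelian_iff_lie_self_eq_bot, LieSubmodule.lie_eq_bot_iff]
  intro x hx y hy
  simpa using Submodule.lie_mem_of_mem_span (N := ⊥)
    (by rintro _ ⟨i, rfl⟩ _ ⟨j, rfl⟩; exact P.rel_zz i j ▸ zero_mem _) hx hy

theorem zIdeal_ne_bot : P.zIdeal ≠ ⊥ := fun h ↦ by
  have hz : P.basis (.inr 0) ∈ P.zIdeal := P.basis_inr_mem_zSpan 0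
  rw [h, LieSubmodule.mem_bot] at hz
  exact P.basis.ne_zero _ hz

theorem span_sl2_sup_zSpan_eq_top :
    span F {P.basis (Sum.inl 0), P.basis (Sum.inl 2), P.basis (Sum.inl 1)} ⊔ P.zSpan = ⊤ := by
  rw [eq_top_iff, ← P.basis.span_eq, span_le]
  rintro _ ⟨i | j, rfl⟩
  · refine Submodule.mem_sup_left (subset_span ?_)
    fin_cases i <;> simp
  · exact Submodule.mem_sup_right (P.basis_inr_mem_zSpan j)

theorem basis_inl_one_notMem_zSpan : P.basis (.inl 1) ∉ P.zSpan := fun hh ↦ by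
  simpa using P.repr_inl_eq_zero_of_mem_zSpan hh 1

theorem zIdeal_eq_radical [CharZero F] : P.zIdeal = radical F P.carrier :=
  le_antisymm ((LieIdeal.solvable_iff_le_radical F P.carrier P.zIdeal).mp inferInstance)
    (P.isSl2Triple.radical_le P.span_sl2_sup_zSpan_eq_top P.basis_inl_one_notMem_zSpan)

theorem repr_lie_h_of_mem_zSpan {x : P.carrier} (hx : x ∈ P.zSpan) (j : Fin (Λ + 1)) :
    P.basis.repr ⁅P.basis (.inl 1), x⁆ (.inr j)
      = (((Λ : ℤ) - 2 * (j : ℕ) : ℤ) : F) * P.basis.repr x (.inr j) := by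
  let φ := P.basis.coord (.inr j) ∘ₗ LieModule.toEnd F P.carrier P.carrier (P.basis (.inl 1))
  let ψ := (((Λ : ℤ) - 2 * (j : ℕ) : ℤ) : F) • P.basis.coord (.inr j)
  refine LinearMap.eqOn_span' (f := φ) (g := ψ) ?_ hx
  rintro _ ⟨k, rfl⟩
  simp only [φ, ψ, LinearMap.comp_apply, LieModule.toEnd_apply_apply, P.rel_hz, map_zsmul,
    LinearMap.smul_apply, Module.Basis.coord_apply, Module.Basis.repr_self, Finsupp.single_apply,
    Sum.inr.injEq]
  split_ifs with hkj
  · subst hkj; simp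
  · simp

theorem repr_lie_f_of_mem_zSpan {x : P.carrier} (hx : x ∈ P.zSpan) (j : ℕ) (hj : j < Λ) :
    P.basis.repr ⁅P.basis (.inl 2), x⁆ (.inr ⟨j + 1, by omega⟩)
      = P.basis.repr x (.inr ⟨j, by omega⟩) := by
  let φ := P.basis.coord (.inr ⟨j + 1, by omega⟩) ∘ₗ
    LieModule.toEnd F P.carrier P.carrier (P.basis (.inl 2))
  refine LinearMap.eqOn_span' (f := φ) (g := P.basis.coord (.inr ⟨j, by omega⟩)) ?_ hx
  rintro _ ⟨⟨k, hk⟩, rfl⟩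
  simp only [φ, LinearMap.comp_apply, LieModule.toEnd_apply_apply, Module.Basis.coord_apply]
  rcases lt_or_eq_of_le (Nat.le_of_lt_succ hk) with hk | rfl
  · simp only [P.rel_fz k hk, Module.Basis.repr_self, Finsupp.single_apply, Sum.inr.injEq,
      Fin.mk.injEq, Nat.add_right_cancel_iff]
  · simp only [P.rel_fzTop, map_zero, Finsupp.coe_zero, Pi.zero_apply, Module.Basis.repr_self,
      Finsupp.single_apply, Sum.inr.injEq, Fin.mk.injEq]
    rw [if_neg (by omega)]

theorem center_eq_bot [CharZero F] (hΛ : 1 ≤ Λ) : center F P.carrier = ⊥ := by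
  refine (LieSubmodule.eq_bot_iff _).mpr fun x hx ↦ P.basis.repr.injective ?_
  have hxz : x ∈ P.zSpan := P.zIdeal_eq_radical.ge (center_le_radical F P.carrier hx)
  have hlie : ∀ y, ⁅y, x⁆ = 0 := (LieModule.mem_maxTrivSubmodule F P.carrier P.carrier x).mp hx
  ext (m | ⟨j, hj⟩)
  · simpa using P.repr_inl_eq_zero_of_mem_zSpan hxz m
  · by_cases hjΛ : j < Λ
    · simpa [hlie] using (P.repr_lie_f_of_mem_zSpan hxz j hjΛ).symm
    · obtain rfl : Λ = j := by omega
      have h := P.repr_lie_h_of_mem_zSpan hxz ⟨Λ, hj⟩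
      have hΛ' : (Λ : F) - 2 * Λ ≠ 0 := by
        rw [show (Λ : F) - 2 * Λ = -Λ by ring, neg_ne_zero, Nat.cast_ne_zero]
        omega
      simpa [hlie, hΛ'] using h

end SL2Lam

/-- The Lie algebra `sl₂^Λ` is not reductive: its radical
`R = Fz_0 ⊕ ⋯ ⊕ Fz_Λ` is nonzero and not contained in the center; in fact the center of
`sl₂^Λ` is trivial, so the radical differs from the center. -/
theorem sl2Lam_not_reductive
    (F : Type) [Field F] [CharZero F] (Λ : ℕ) (hΛ : 1 ≤ Λ) (P : SL2Lam F Λ) :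
    ∃ R : LieIdeal F P.carrier,
      (R : Submodule F P.carrier)
        = Submodule.span F (Set.range fun j : Fin (Λ + 1) => P.basis (Sum.inr j)) ∧
      R = LieAlgebra.radical F P.carrier ∧
      R ≠ ⊥ ∧
      ¬ R ≤ LieAlgebra.center F P.carrier ∧
      LieAlgebra.center F P.carrier = ⊥ ∧
      LieAlgebra.radical F P.carrier ≠ LieAlgebra.center F P.carrier := by
  have hrad := P.zIdeal_eq_radical
  have hcenter := P.center_eq_bot hΛ
  refine ⟨P.zIdeal, rfl, hrad, P.zIdeal_ne_bot, ?_, hcenter, ?_⟩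
  · rw [hcenter, le_bot_iff]
    exact P.zIdeal_ne_bot
  · rw [← hrad, hcenter]
    exact P.zIdeal_ne_bot
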